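/- arXiv:1105.4083 — 4 statements merged into one kernel-verified Lean document; each statement's English description precedes it below -/
import Mathlib

section
/- The Moore determinant V_q(b_1,...,b_d) = det(b_i^{q^{j-1}})_{1≤i,j≤d}, viewed as a polynomial in F_q[b_1,...,b_d], factors as c · ∏_{ε ∈ P^{d-1}(F_q)} (ε_1 b_1 + ... + ε_d b_d) for some nonzero constant c ∈ F_q, where the product runs over representatives of projective space whose first nonzero coordinate is 1. -/
/-!
Every linear form `ℓ_ε = Σ εᵢ bᵢ` with coefficients in `F_q` divides the Moore determinant: the
`q^j`-th power map is `F_q`-linear, so `Σ εᵢ • (row i)` is the row `(ℓ_ε ^ q^j)_j`, a multiple of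
`ℓ_ε`, and with `ε_{i₀} = 1` this combination replaces row `i₀` without changing the determinant.
The forms `ℓ_ε` for normalized `ε` are irreducible of degree one and pairwise non-associated, so
their product divides the determinant. Both are homogeneous of degree `1 + q + ⋯ + q^(d-1)` (which
is also the number of normalized `ε`), and the determinant is nonzero (its diagonal monomial
occurs exactly once), so the quotient is a nonzero constant.
-/

open scoped Classical

open MvPolynomial Finset

theorem Matrix.dvd_det_of_sum_smul_rows_eq {n R : Type*} [Fintype n] [DecidableEq n] [CommRing R]
    (A : Matrix n n R) {i : n} {c : n → R} (hc : c i = 1) {s : R} {w : n → R}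
    (h : ∑ k, c k • A k = s • w) : s ∣ A.det :=
  ⟨(A.updateRow i w).det, by rw [← det_updateRow_smul, ← h, det_updateRow_sum, hc, one_smul]⟩

theorem Matrix.isHomogeneous_det {n σ R : Type*} [Fintype n] [DecidableEq n] [CommRing R]
    (M : Matrix n n (MvPolynomial σ R)) (w : n → ℕ) (h : ∀ i j, (M i j).IsHomogeneous (w j)) :
    M.det.IsHomogeneous (∑ j, w j) := by
  rw [Matrix.det_apply']
  refine IsHomogeneous.sum _ _ _ fun τ _ => ?_
  rw [← map_intCast (C : R →+* MvPolynomial σ R)]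
  simpa using (IsHomogeneous.prod _ _ w fun i _ => h (τ i) i).C_mul ((Equiv.Perm.sign τ : ℤ) : R)

theorem FiniteField.sum_smul_pow_card_pow {K R ι : Type*} [Field K] [Fintype K] [CommRing R]
    [Algebra K R] (s : Finset ι) (ε : ι → K) (v : ι → R) (j : ℕ) :
    (∑ i ∈ s, ε i • v i) ^ Fintype.card K ^ j = ∑ i ∈ s, ε i • v i ^ Fintype.card K ^ j := by
  induction j with
  | zero => simp
  | succ j ih =>
    have frob :=
      map_sum (FiniteField.frobeniusAlgHom K R) (fun i => ε i • v i ^ Fintype.card K ^ j) s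
    simp only [map_smul, FiniteField.coe_frobeniusAlgHom] at frob
    simp only [pow_succ, pow_mul, ih, frob]

def mooreMatrix {R : Type*} [CommRing R] (q : ℕ) {d : ℕ} (v : Fin d → R) :
    Matrix (Fin d) (Fin d) R :=
  Matrix.of fun i j => v i ^ q ^ (j : ℕ)

theorem sum_smul_dvd_det_mooreMatrix {K R : Type*} [Field K] [Fintype K] [CommRing R]
    [Algebra K R] {d : ℕ} (v : Fin d → R) {ε : Fin d → K} {i : Fin d} (hε : ε i = 1) :
    (∑ k, ε k • v k) ∣ (mooreMatrix (Fintype.card K) v).det := by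
  refine (mooreMatrix _ v).dvd_det_of_sum_smul_rows_eq (i := i)
    (c := fun k => algebraMap K R (ε k)) (by simp [hε])
    (w := fun j : Fin d => (∑ k, ε k • v k) ^ (Fintype.card K ^ (j : ℕ) - 1)) ?_
  ext j
  have hpos : 0 < Fintype.card K ^ (j : ℕ) := pow_pos Fintype.card_pos _
  rw [Pi.smul_apply, smul_eq_mul, ← pow_succ', Nat.sub_add_cancel hpos,
    FiniteField.sum_smul_pow_card_pow, Finset.sum_apply]
  simp [mooreMatrix, Algebra.smul_def]

theorem MvPolynomial.det_X_pow_ne_zero {ι R : Type*} [Fintype ι] [DecidableEq ι] [CommRing R]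
    [Nontrivial R] {e : ι → ℕ} (he : Function.Injective e) :
    (Matrix.of fun i j => (X i : MvPolynomial ι R) ^ e j).det ≠ 0 := by
  let exponent (τ : Equiv.Perm ι) : ι →₀ ℕ := ∑ i, Finsupp.single (τ i) (e i)
  have hexp : ∀ τ k, exponent τ (τ k) = e k := by
    intro τ k
    simp [exponent, Finsupp.finsetSum_apply, Finsupp.single_apply, τ.injective.eq_iff]
  have hexp_inj : ∀ τ, exponent τ = exponent 1 → τ = 1 := by
    intro τ hτ
    ext k
    have hτk := hexp τ k
    rw [hτ, ← Equiv.Perm.one_apply (τ k), hexp] at hτk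
    exact he hτk
  have hterm : ∀ τ : Equiv.Perm ι,
      ∏ i, (X (τ i) : MvPolynomial ι R) ^ e i = monomial (exponent τ) 1 := by
    intro τ
    simp [exponent, monomial_sum_index, X_pow_eq_monomial]
  have hdet : (Matrix.of fun i j => (X i : MvPolynomial ι R) ^ e j).det =
      ∑ τ : Equiv.Perm ι, monomial (exponent τ) ((Equiv.Perm.sign τ : ℤ) : R) := by
    rw [Matrix.det_apply']
    refine sum_congr rfl fun τ _ => ?_
    rw [← map_intCast (C : R →+* MvPolynomial ι R)]
    change C _ * ∏ i, (X (τ i) : MvPolynomial ι R) ^ e i = _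
    rw [hterm, C_mul_monomial, mul_one]
  have hcoeff :
      coeff (exponent 1) (Matrix.of fun i j => (X i : MvPolynomial ι R) ^ e j).det = 1 := by
    rw [hdet, coeff_sum, Fintype.sum_eq_single 1 fun τ hτ => ?_]
    · simp
    · rw [coeff_monomial, if_neg (mt (hexp_inj τ) hτ)]
  intro h0
  rw [h0, coeff_zero] at hcoeff
  exact zero_ne_one hcoeff

theorem MvPolynomial.IsHomogeneous.exists_C_mul_eq_of_dvd {σ R : Type*} [CommRing R] [IsDomain R]
    {p f : MvPolynomial σ R} {n : ℕ} (hp : p.IsHomogeneous n) (hp0 : p ≠ 0)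
    (hf : f.IsHomogeneous n) (hdvd : f ∣ p) : ∃ c, c ≠ 0 ∧ p = C c * f := by
  obtain ⟨t, rfl⟩ := hdvd
  have hf0 : f ≠ 0 := left_ne_zero_of_mul hp0
  have ht0 : t ≠ 0 := right_ne_zero_of_mul hp0
  have hdeg : t.totalDegree = 0 := by
    have := hp.totalDegree hp0
    rw [totalDegree_mul_of_isDomain hf0 ht0, hf.totalDegree hf0] at this
    omega
  have ht : t = C (t.coeff 0) := totalDegree_eq_zero_iff_eq_C.mp hdeg
  refine ⟨t.coeff 0, fun h => ht0 ?_, by rw [mul_comm, ← ht]⟩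
  rw [ht, h, C_0]

-- Reducible, so that `Finset.filter` by it uses the decidability instance of its unfolding.
abbrev HasLeadingOne {ι K : Type*} [LinearOrder ι] [One K] [Zero K] (ε : ι → K) : Prop :=
  ∃ i, ε i = 1 ∧ ∀ j < i, ε j = 0

theorem HasLeadingOne.eq_of_mul_eq {ι K : Type*} [LinearOrder ι] [MulZeroOneClass K]
    [NeZero (1 : K)] {ε ε' : ι → K} {a : K}
    (hε : HasLeadingOne ε) (hε' : HasLeadingOne ε') (h : ∀ i, ε' i = ε i * a) : ε' = ε := by
  obtain ⟨i, hi, hlt⟩ := hε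
  obtain ⟨i', hi', hlt'⟩ := hε'
  have ha : a = ε' i := by rw [h, hi, one_mul]
  rcases lt_trichotomy i i' with hii' | rfl | hi'i
  · rw [h, ha, hlt' i hii', mul_zero] at hi'
    exact absurd hi' zero_ne_one
  · funext j
    rw [h, ha, hi', mul_one]
  · rw [h, hlt i' hi'i, zero_mul] at hi'
    exact absurd hi' zero_ne_one

theorem card_filter_hasLeadingOne_at (K : Type*) [Zero K] [One K] [Fintype K] {d : ℕ} (i : Fin d) :
    #(univ.filter fun ε : Fin d → K => ε i = 1 ∧ ∀ j < i, ε j = 0) =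
      Fintype.card K ^ (d - 1 - i) := by
  have hpi : (univ.filter fun ε : Fin d → K => ε i = 1 ∧ ∀ j < i, ε j = 0) =
      Fintype.piFinset fun j => if j < i then {0} else if j = i then {1} else univ := by
    ext ε
    simp only [mem_filter, mem_univ, true_and, Fintype.mem_piFinset]
    constructor
    · rintro ⟨hi, hlt⟩ j
      rcases lt_trichotomy j i with h | rfl | h
      · simp [h, hlt j h]
      · simp [hi]
      · simp [h.not_gt, h.ne']
    · intro h
      refine ⟨by simpa using h i, fun j hj => by simpa [hj] using h j⟩
  rw [hpi, Fintype.card_piFinset, ← Fin.card_Ioi, ← filter_lt_eq_Ioi, ← prod_const,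
    prod_filter]
  refine prod_congr rfl fun j _ => ?_
  rcases lt_trichotomy j i with h | rfl | h
  · simp [h, h.not_gt]
  · simp
  · simp [h, h.not_gt, h.ne']

theorem card_filter_hasLeadingOne (K : Type*) [Zero K] [One K] [NeZero (1 : K)] [Fintype K]
    (d : ℕ) :
    #(univ.filter fun ε : Fin d → K => HasLeadingOne ε) =
      ∑ i : Fin d, Fintype.card K ^ (i : ℕ) := by
  have hunion : (univ.filter fun ε : Fin d → K => HasLeadingOne ε) =
      univ.biUnion fun i => univ.filter fun ε : Fin d → K => ε i = 1 ∧ ∀ j < i, ε j = 0 := by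
    ext ε
    simp only [mem_filter, mem_biUnion, mem_univ, true_and]
  rw [hunion, card_biUnion]
  · simp only [card_filter_hasLeadingOne_at]
    rw [← Equiv.sum_comp Fin.revPerm]
    refine sum_congr rfl fun i _ => ?_
    simp only [Fin.revPerm_apply, Fin.val_rev]
    congr 1
    omega
  · intro i _ i' _ hne
    rw [Function.onFun, disjoint_filter]
    rintro ε - ⟨hi, hlt⟩ ⟨hi', hlt'⟩
    rcases hne.lt_or_gt with h | h
    · exact one_ne_zero (hi.symm.trans (hlt' i h))
    · exact one_ne_zero (hi'.symm.trans (hlt i' h))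

namespace MvPolynomial

variable {σ R : Type*} [Fintype σ]

section CommSemiring

variable [CommSemiring R]

noncomputable def linearForm (ε : σ → R) : MvPolynomial σ R :=
  ∑ i, C (ε i) * X i

theorem coeff_single_linearForm (ε : σ → R) (i : σ) :
    (linearForm ε).coeff (Finsupp.single i 1) = ε i := by
  simp [linearForm, coeff_sum, coeff_C_mul, coeff_X, Finsupp.single_eq_single_iff]

theorem isHomogeneous_linearForm (ε : σ → R) : (linearForm ε).IsHomogeneous 1 :=
  IsHomogeneous.sum _ _ _ fun i _ => isHomogeneous_C_mul_X (ε i) i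

end CommSemiring

variable [CommRing R] [IsDomain R]

theorem irreducible_linearForm {ε : σ → R} {i : σ} (hε : ε i = 1) :
    Irreducible (linearForm ε) := by
  have hcoeff := coeff_single_linearForm ε i
  rw [hε] at hcoeff
  refine irreducible_of_totalDegree_eq_one ((isHomogeneous_linearForm ε).totalDegree ?_) ?_
  · intro h
    rw [h, coeff_zero] at hcoeff
    exact zero_ne_one hcoeff
  · intro x hx
    exact isUnit_of_dvd_one (hcoeff ▸ hx (Finsupp.single i 1))

theorem eq_of_associated_linearForm [LinearOrder σ] {ε ε' : σ → R} (hε : HasLeadingOne ε)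
    (hε' : HasLeadingOne ε') (h : Associated (linearForm ε) (linearForm ε')) : ε = ε' := by
  obtain ⟨u, hu⟩ := h
  obtain ⟨a, -, ha⟩ := (isUnit_iff_eq_C_of_isReduced (P := (u : MvPolynomial σ R))).mp u.isUnit
  refine (hε.eq_of_mul_eq hε' (a := a) fun i => ?_).symm
  rw [← coeff_single_linearForm ε', ← hu, ha, mul_comm, coeff_C_mul, coeff_single_linearForm,
    mul_comm]

theorem isRelPrime_linearForm [LinearOrder σ] {ε ε' : σ → R} (hε : HasLeadingOne ε)
    (hε' : HasLeadingOne ε') (hne : ε ≠ ε') : IsRelPrime (linearForm ε) (linearForm ε') := by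
  have ⟨i, hi, _⟩ := hε
  have ⟨i', hi', _⟩ := hε'
  rw [(irreducible_linearForm hi).isRelPrime_iff_not_dvd]
  exact fun hdvd => hne <| eq_of_associated_linearForm hε hε' <|
    (irreducible_linearForm hi).associated_of_dvd (irreducible_linearForm hi') hdvd

end MvPolynomial

section Moore

variable (K : Type*) [Field K] [Fintype K] (d : ℕ)

theorem det_mooreMatrix_X_ne_zero :
    (mooreMatrix (Fintype.card K) (X : Fin d → MvPolynomial (Fin d) K)).det ≠ 0 :=
  det_X_pow_ne_zero ((Nat.pow_right_injective Fintype.one_lt_card).comp Fin.val_injective)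

theorem isHomogeneous_det_mooreMatrix_X :
    (mooreMatrix (Fintype.card K) (X : Fin d → MvPolynomial (Fin d) K)).det.IsHomogeneous
      (∑ j : Fin d, Fintype.card K ^ (j : ℕ)) :=
  Matrix.isHomogeneous_det _ _ fun i _ => isHomogeneous_X_pow i _

theorem isHomogeneous_prod_linearForm :
    (∏ ε ∈ univ.filter fun ε : Fin d → K => HasLeadingOne ε, linearForm ε).IsHomogeneous
      (∑ j : Fin d, Fintype.card K ^ (j : ℕ)) := by
  rw [← card_filter_hasLeadingOne, card_eq_sum_ones]
  exact IsHomogeneous.prod _ _ _ fun ε _ => isHomogeneous_linearForm ε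

theorem prod_linearForm_dvd_det_mooreMatrix_X :
    ∏ ε ∈ univ.filter fun ε : Fin d → K => HasLeadingOne ε, linearForm ε ∣
      (mooreMatrix (Fintype.card K) (X : Fin d → MvPolynomial (Fin d) K)).det := by
  refine prod_dvd_of_isRelPrime (fun ε hε ε' hε' hne => ?_) fun ε hε => ?_
  · exact isRelPrime_linearForm (mem_filter.1 hε).2 (mem_filter.1 hε').2 hne
  · obtain ⟨i, hi, -⟩ := (mem_filter.1 hε).2
    have hsmul : linearForm ε = ∑ k, ε k • (X k : MvPolynomial (Fin d) K) := by
      simp only [linearForm, smul_eq_C_mul]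
    rw [hsmul]
    exact sum_smul_dvd_det_mooreMatrix X hi

end Moore

theorem moore_det_factorization_general (F : Type*) [Field F] [Fintype F] (d : ℕ) :
    ∃ c : F, c ≠ 0 ∧
      (Matrix.of fun i j : Fin d =>
          (MvPolynomial.X i : MvPolynomial (Fin d) F) ^ (Fintype.card F) ^ (j : ℕ)).det =
        MvPolynomial.C c *
          ∏ ε ∈ Finset.univ.filter (fun ε : Fin d → F =>
              ∃ i : Fin d, ε i = 1 ∧ ∀ j : Fin d, j < i → ε j = 0),
            ∑ i : Fin d, MvPolynomial.C (ε i) * MvPolynomial.X i :=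
  (isHomogeneous_det_mooreMatrix_X F d).exists_C_mul_eq_of_dvd (det_mooreMatrix_X_ne_zero F d)
    (isHomogeneous_prod_linearForm F d) (prod_linearForm_dvd_det_mooreMatrix_X F d)

/-- The Moore determinant `det (b_i ^ q^(j-1))` over a finite field `F` with
`q = |F|` elements factors, as a polynomial in `F[b_1, …, b_d]`, as a nonzero constant times
the product of the linear forms `Σ ε_i b_i` over representatives `ε` of projective space
`P^{d-1}(F_q)` whose first nonzero coordinate equals `1`. -/
theorem moore_det_factorization (F : Type*) [Field F] [Fintype F] (d : ℕ) (hd : 1 ≤ d) :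
    ∃ c : F, c ≠ 0 ∧
      (Matrix.of fun i j : Fin d =>
          (MvPolynomial.X i : MvPolynomial (Fin d) F) ^ (Fintype.card F) ^ (j : ℕ)).det =
        MvPolynomial.C c *
          ∏ ε ∈ Finset.univ.filter (fun ε : Fin d → F =>
              ∃ i : Fin d, ε i = 1 ∧ ∀ j : Fin d, j < i → ε j = 0),
            ∑ i : Fin d, MvPolynomial.C (ε i) * MvPolynomial.X i :=
  moore_det_factorization_general F d
end

section
/- Let K be an infinite field of characteristic p containing F_q and (D,φ) an étale φ-module over K of dimension d (i.e., the image of φ spans D over K). Then there exists x ∈ D such that (x, φ(x), ..., φ^{d-1}(x)) is a basis of D over K. -/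
/-!
Build `x` by induction on `r`, keeping `x, φ x, …, φ^[r-1] x` independent. For `r < d` the
étale condition gives `span (range φ^[r]) = ⊤`, so some `φ^[r] y` lies outside their span. Test
the family `φ^[i] (x + t • y)`, `i ≤ r`, against a linear map `L : D → K^(r+1)`: its determinant
is `∑_S det_S * t ^ (∑ i ∈ S, q ^ i)`, whose exponents are distinct (base-`q` expansions are
unique), and the coefficient of `t ^ q ^ r` is the nonzero determinant of
`(x, …, φ^[r-1] x, φ^[r] y)`. As `K` is infinite, some `t` makes the determinant nonzero.
-/

/-- Multiplication in the skew polynomial ring `K[X,σ]` with `σ x = x ^ q`, so that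
`X * a = a ^ q * X`: `(Σ aᵢXⁱ) ⬝ (Σ bⱼXʲ) = Σ aᵢ bⱼ^(qⁱ) X^(i+j)`.
We use the type `Polynomial K` as the carrier of coefficients. -/
noncomputable def skewMul {K : Type*} [Field K] (q : ℕ) (P Q : Polynomial K) : Polynomial K :=
  ∑ i ∈ P.support, ∑ j ∈ Q.support,
    Polynomial.C (P.coeff i * Q.coeff j ^ q ^ i) * Polynomial.X ^ (i + j)

/-- Evaluation of a skew polynomial `Σ aᵢ Xⁱ` at a semilinear map `φ`, applied to `x`:
`Σ aᵢ • φ^[i] x`. -/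
noncomputable def skewEval {K D : Type*} [Field K] [AddCommGroup D] [Module K D]
    (P : Polynomial K) (φ : D → D) (x : D) : D :=
  ∑ i ∈ P.support, P.coeff i • (φ^[i] x)

/-- `A` right-divides `B` in `K[X,σ]` (σ x = x^q): `B = C ⬝ A` for some `C`. -/
def SkewRightDvd {K : Type*} [Field K] (q : ℕ) (A B : Polynomial K) : Prop :=
  ∃ C : Polynomial K, B = skewMul q C A

/-- `M` is a left lowest common multiple of `U` and `P` in `K[X,σ]`. -/
def IsLlcm {K : Type*} [Field K] (q : ℕ) (M U P : Polynomial K) : Prop :=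
  SkewRightDvd q U M ∧ SkewRightDvd q P M ∧
    ∀ N : Polynomial K, SkewRightDvd q U N → SkewRightDvd q P N → SkewRightDvd q M N

/-- `P` is the minimal (monic, least-degree) skew polynomial annihilating `x`
under the semilinear map `φ`; equivalently the monic generator of the left ideal
`{Q | Q(φ)(x) = 0}`. -/
def IsMinSkew {K D : Type*} [Field K] [AddCommGroup D] [Module K D]
    (P : Polynomial K) (φ : D → D) (x : D) : Prop :=
  P.Monic ∧ skewEval P φ x = 0 ∧
    ∀ Q : Polynomial K, Q ≠ 0 → skewEval Q φ x = 0 → P.natDegree ≤ Q.natDegree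

/-- `P` is irreducible in `K[X,σ]`: nonconstant, and not a product of two skew
polynomials of strictly smaller degree. -/
def IrredSkew {K : Type*} [Field K] (q : ℕ) (P : Polynomial K) : Prop :=
  0 < P.natDegree ∧ ∀ A B : Polynomial K, P = skewMul q A B →
    ¬(A.natDegree < P.natDegree ∧ B.natDegree < P.natDegree)

/-- Two skew polynomials `P`, `Q` are similar: there is `U` with `rgcd(U,P) = 1`
(every common right divisor of `U` and `P` right-divides `1`) and `llcm(U,P) = Q ⬝ U`. -/
def SkewSimilar {K : Type*} [Field K] (q : ℕ) (P Q : Polynomial K) : Prop :=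
  ∃ U : Polynomial K,
    (∀ D : Polynomial K, SkewRightDvd q D U → SkewRightDvd q D P → SkewRightDvd q D 1) ∧
    IsLlcm q (skewMul q Q U) U P

open Function

theorem Fin.geomSum_injective {q : ℕ} (hq : 2 ≤ q) (n : ℕ) :
    Injective fun s : Finset (Fin n) => ∑ i ∈ s, q ^ (i : ℕ) := fun s t hst =>
  Finset.map_injective Fin.valEmbedding <| Finset.geomSum_injective hq <| by
    simpa only [Finset.sum_map, Fin.valEmbedding_apply] using hst

theorem eq_zero_of_forall_sum_mul_pow_eq_zero {ι K : Type*} [Fintype ι] [CommRing K] [IsDomain K]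
    [Infinite K] {e : ι → ℕ} (he : Injective e) {c : ι → K}
    (h : ∀ t : K, ∑ i, c i * t ^ e i = 0) (i : ι) : c i = 0 := by
  classical
  have hP : ∑ j, Polynomial.C (c j) * Polynomial.X ^ e j = 0 :=
    Polynomial.zero_of_eval_zero _ fun t => by simpa [Polynomial.eval_finsetSum] using h t
  simpa [Polynomial.finsetSum_coeff, Polynomial.coeff_C_mul_X_pow, he.eq_iff] using
    congrArg (Polynomial.coeff · (e i)) hP

theorem Matrix.det_add_smul_eq_sum {n R : Type*} [Fintype n] [DecidableEq n] [CommRing R]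
    (u w : n → n → R) (c : n → R) :
    (Matrix.of fun i => u i + c i • w i).det =
      ∑ s : Finset n, (Matrix.of (s.piecewise w u)).det * ∏ i ∈ s, c i := by
  change detRowAlternating (fun i => u i + c i • w i) =
    ∑ s : Finset n, detRowAlternating (s.piecewise w u) * ∏ i ∈ s, c i
  rw [show (fun i => u i + c i • w i) = (fun i => c i • w i) + u from funext fun i => add_comm _ _,
    AlternatingMap.map_add_univ]
  refine Finset.sum_congr rfl fun s _ => ?_
  have : s.piecewise (fun i => c i • w i) u
      = s.piecewise (fun i => c i • s.piecewise w u i) (s.piecewise w u) := by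
    ext i : 1; by_cases hi : i ∈ s <;> simp [hi]
  rw [this, ← AlternatingMap.coe_multilinearMap, MultilinearMap.map_piecewise_smul, smul_eq_mul,
    mul_comm]

theorem linearIndependent_iff_exists_det_ne_zero {ι K D : Type*} [Fintype ι] [DecidableEq ι]
    [Field K] [AddCommGroup D] [Module K D] {v : ι → D} :
    LinearIndependent K v ↔ ∃ L : D →ₗ[K] ι → K, (Matrix.of fun i => L (v i)).det ≠ 0 := by
  refine ⟨fun hv => ?_, fun ⟨L, hL⟩ => ?_⟩
  · obtain ⟨L, hL⟩ := (Fintype.linearCombination K v).exists_leftInverse_of_injective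
      (LinearMap.ker_eq_bot.mpr hv.fintypeLinearCombination_injective)
    have hLv : (Matrix.of fun i => L (v i)) = 1 := by
      ext i j
      simpa [Fintype.linearCombination_apply_single, Matrix.one_apply, Pi.single_apply, eq_comm]
        using congrFun (LinearMap.congr_fun hL (Pi.single i 1)) j
    exact ⟨L, by simp [hLv]⟩
  · exact LinearIndependent.of_comp L (Matrix.linearIndependent_rows_of_det_ne_zero hL)

section SemilinearIterate

variable {K D : Type*} [Field K] [AddCommGroup D] [Module K D] {q : ℕ} {φ : D → D}

theorem iterate_map_add_of_map_add (hadd : ∀ x y, φ (x + y) = φ x + φ y) (n : ℕ) (x y : D) :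
    φ^[n] (x + y) = φ^[n] x + φ^[n] y :=
  iterate_map_add (AddHom.mk φ hadd) n x y

theorem iterate_map_smul_of_map_smul (hsemi : ∀ (c : K) (x : D), φ (c • x) = c ^ q • φ x)
    (n : ℕ) (c : K) (x : D) : φ^[n] (c • x) = c ^ q ^ n • φ^[n] x := by
  induction n with
  | zero => simp
  | succ n ih => rw [iterate_succ_apply', iterate_succ_apply', ih, hsemi, ← pow_mul, ← pow_succ]

theorem span_range_iterate_eq_top (hadd : ∀ x y, φ (x + y) = φ x + φ y)
    (hsemi : ∀ (c : K) (x : D), φ (c • x) = c ^ q • φ x)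
    (hetale : Submodule.span K (Set.range φ) = ⊤) (n : ℕ) :
    Submodule.span K (Set.range φ^[n]) = ⊤ := by
  induction n with
  | zero => simp
  | succ n ih =>
    have hφ : ∀ z ∈ Submodule.span K (Set.range φ^[n]),
        φ z ∈ Submodule.span K (Set.range φ^[n + 1]) := fun z hz => by
      induction hz using Submodule.span_induction with
      | mem _ hw =>
        obtain ⟨m, rfl⟩ := hw
        exact Submodule.subset_span ⟨m, iterate_succ_apply' φ n m⟩
      | zero =>
        rw [show φ 0 = 0 from (AddMonoidHom.mk' φ hadd).map_zero]
        exact Submodule.zero_mem _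
      | add u w _ _ hu hw => simpa [hadd] using Submodule.add_mem _ hu hw
      | smul c w _ hw => simpa [hsemi] using Submodule.smul_mem _ (c ^ q) hw
    rw [eq_top_iff, ← hetale, Submodule.span_le]
    rintro _ ⟨z, rfl⟩
    exact hφ z (ih ▸ Submodule.mem_top)

theorem det_iterate_add_smul_eq_sum (hadd : ∀ x y, φ (x + y) = φ x + φ y)
    (hsemi : ∀ (c : K) (x : D), φ (c • x) = c ^ q • φ x) {n : ℕ} (L : D →ₗ[K] Fin n → K)
    (x y : D) (t : K) :
    (Matrix.of fun i : Fin n => L (φ^[i] (x + t • y))).det =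
      ∑ s : Finset (Fin n),
        (Matrix.of (s.piecewise (fun i => L (φ^[i] y)) (fun i => L (φ^[i] x)))).det *
          t ^ ∑ i ∈ s, q ^ (i : ℕ) := by
  simp only [iterate_map_add_of_map_add hadd, iterate_map_smul_of_map_smul hsemi, map_add,
    map_smul, Matrix.det_add_smul_eq_sum, Finset.prod_pow_eq_pow_sum]

theorem exists_linearIndependent_iterate_add_smul [Infinite K] (hq : 2 ≤ q)
    (hadd : ∀ x y, φ (x + y) = φ x + φ y) (hsemi : ∀ (c : K) (x : D), φ (c • x) = c ^ q • φ x)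
    {r : ℕ} {x y : D}
    (hxy : LinearIndependent K
      (Fin.snoc (α := fun _ => D) (fun i : Fin r => φ^[i] x) (φ^[r] y))) :
    ∃ t : K, LinearIndependent K fun i : Fin (r + 1) => φ^[i] (x + t • y) := by
  obtain ⟨L, hL⟩ := linearIndependent_iff_exists_det_ne_zero.mp hxy
  by_contra! hdep
  have hdet : ∀ t : K, ∑ s : Finset (Fin (r + 1)),
      (Matrix.of (s.piecewise (fun i => L (φ^[i] y)) (fun i => L (φ^[i] x)))).det *
        t ^ ∑ i ∈ s, q ^ (i : ℕ) = 0 := fun t => by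
    rw [← det_iterate_add_smul_eq_sum hadd hsemi]
    by_contra hne
    exact hdep t (linearIndependent_iff_exists_det_ne_zero.mpr ⟨L, hne⟩)
  refine hL ?_
  -- the coefficient of `t ^ q ^ r`, i.e. of `s = {Fin.last r}`, is the determinant for `hxy`
  convert eq_zero_of_forall_sum_mul_pow_eq_zero (Fin.geomSum_injective hq _) hdet {Fin.last r}
    using 3
  ext i : 1
  refine Fin.lastCases ?_ (fun i => ?_) i <;> simp

theorem exists_linearIndependent_iterate [Infinite K] [FiniteDimensional K D] (hq : 2 ≤ q)
    (hadd : ∀ x y, φ (x + y) = φ x + φ y) (hsemi : ∀ (c : K) (x : D), φ (c • x) = c ^ q • φ x)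
    (hetale : Submodule.span K (Set.range φ) = ⊤) {r : ℕ} (hr : r ≤ Module.finrank K D) :
    ∃ x : D, LinearIndependent K fun i : Fin r => φ^[i] x := by
  induction r with
  | zero => exact ⟨0, linearIndependent_empty_type⟩
  | succ r ih =>
    obtain ⟨x, hx⟩ := ih (by omega)
    set W := Submodule.span K (Set.range fun i : Fin r => φ^[i] x)
    have hW : W ≠ ⊤ := fun h => by
      have hrank : Module.finrank K W = r := (finrank_span_eq_card hx).trans (Fintype.card_fin r)
      rw [h, finrank_top] at hrank
      omega
    obtain ⟨y, hy⟩ : ∃ y, φ^[r] y ∉ W := by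
      by_contra! h
      refine hW (eq_top_iff.mpr ?_)
      rw [← span_range_iterate_eq_top hadd hsemi hetale r, Submodule.span_le]
      exact Set.range_subset_iff.mpr h
    obtain ⟨t, ht⟩ := exists_linearIndependent_iterate_add_smul hq hadd hsemi
      (linearIndependent_finSnoc.mpr ⟨hx, hy⟩)
    exact ⟨x + t • y, ht⟩

end SemilinearIterate

theorem etale_phi_module_has_generator_general (K : Type*) [Field K] [Infinite K]
    (p a q : ℕ) (hp : p.Prime) (ha : 0 < a) (hq : q = p ^ a)
    (D : Type*) [AddCommGroup D] [Module K D] [FiniteDimensional K D]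
    (φ : D → D) (hadd : ∀ x y : D, φ (x + y) = φ x + φ y)
    (hsemi : ∀ (c : K) (x : D), φ (c • x) = c ^ q • φ x)
    (hetale : Submodule.span K (Set.range φ) = ⊤) :
    ∃ x : D,
      LinearIndependent K (fun i : Fin (Module.finrank K D) => φ^[(i : ℕ)] x) ∧
      Submodule.span K
        (Set.range fun i : Fin (Module.finrank K D) => φ^[(i : ℕ)] x) = ⊤ := by
  have hq2 : 2 ≤ q := hq ▸ Nat.one_lt_pow ha.ne' hp.one_lt
  obtain ⟨x, hx⟩ := exists_linearIndependent_iterate hq2 hadd hsemi hetale le_rfl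
  exact ⟨x, hx, hx.span_eq_top_of_card_eq_finrank' (Fintype.card_fin _)⟩

/-- Over an infinite field `K` of characteristic `p` containing `F_q`, any
étale `φ`-module `(D, φ)` of dimension `d` (the image of `φ` spans `D`) admils an element
`x` such that `(x, φ(x), …, φ^{d-1}(x))` is a basis of `D` over `K`. -/
theorem etale_phi_module_has_generator (K : Type*) [Field K] [Infinite K]
    (p a q : ℕ) (hp : p.Prime) [CharP K p] (ha : 0 < a) (hq : q = p ^ a)
    (hFq : Nat.card {x : K // x ^ q = x} = q)
    (D : Type*) [AddCommGroup D] [Module K D] [FiniteDimensional K D]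
    (φ : D → D) (hadd : ∀ x y : D, φ (x + y) = φ x + φ y)
    (hsemi : ∀ (c : K) (x : D), φ (c • x) = c ^ q • φ x)
    (hetale : Submodule.span K (Set.range φ) = ⊤) :
    ∃ x : D,
      LinearIndependent K (fun i : Fin (Module.finrank K D) => φ^[(i : ℕ)] x) ∧
      Submodule.span K
        (Set.range fun i : Fin (Module.finrank K D) => φ^[(i : ℕ)] x) = ⊤ :=
  etale_phi_module_has_generator_general K p a q hp ha hq D φ hadd hsemi hetale
end

section
/- Let 0 → D_1 → D → D_2 → 0 be an exact sequence of φ-modules over a field K of characteristic p containing F_q, and suppose x ∈ D generates D (i.e., x, φ(x), ..., φ^{d-1}(x) is a basis where d = dim D). Let x̄ be the image of x in D_2 and x_1 = χ_{φ_2,x̄}(φ)(x) ∈ D_1. Then x̄ generates D_2, x_1 generates D_1, and χ_{φ,x} = χ_{φ_1,x_1} · χ_{φ_2,x̄} in K[X,σ]. -/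
/-! The evaluation map `P ↦ P(φ)(x)` sends `K[X,σ]` onto the span of the orbit of `x`, and right
division by a monic `χ` with `χ(φ)(x) = 0` shows that every `P(φ)(x)` already lies in the span of
`x, …, φ^(deg χ - 1)(x)`. For minimal `χ` these iterates are independent, so for a cyclic vector
`deg χ = dim` and the first `dim` iterates form a basis.

The image `π x` is cyclic with `x`. For `w ∈ D₁` write `ι w = Q(φ)(x)`; then `Q(φ₂)(π x) = 0`, so
`Q = A ⬝ χ₂` and `ι w = A(φ)(ι y₁) = ι (A(φ₁)(y₁))`, hence `y₁` is cyclic. Finally `χ₁ ⬝ χ₂` is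
monic, kills `x` and has degree `dim D₁ + dim D₂ = dim D = deg χ`, so it is `χ`. -/

open Polynomial Module

section SkewEval

variable {K V : Type*} [Field K] [AddCommGroup V] [Module K V]

variable (K) in
noncomputable def skewEvalLinearMap (φ : V → V) (x : V) : K[X] →ₗ[K] V :=
  lsum fun i => LinearMap.toSpanSingleton K V (φ^[i] x)

theorem skewEvalLinearMap_apply (φ : V → V) (x : V) (P : K[X]) :
    skewEvalLinearMap K φ x P = skewEval P φ x :=
  rfl

variable (φ : V → V) (x : V)

theorem skewEval_add (P Q : K[X]) : skewEval (P + Q) φ x = skewEval P φ x + skewEval Q φ x :=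
  map_add (skewEvalLinearMap K φ x) P Q

theorem skewEval_sub (P Q : K[X]) : skewEval (P - Q) φ x = skewEval P φ x - skewEval Q φ x :=
  map_sub (skewEvalLinearMap K φ x) P Q

theorem skewEval_sum {ι : Type*} (s : Finset ι) (P : ι → K[X]) :
    skewEval (∑ i ∈ s, P i) φ x = ∑ i ∈ s, skewEval (P i) φ x :=
  map_sum (skewEvalLinearMap K φ x) P s

theorem skewEval_monomial (n : ℕ) (c : K) : skewEval (monomial n c) φ x = c • φ^[n] x := by
  rw [← skewEvalLinearMap_apply, skewEvalLinearMap, lsum_apply,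
    sum_monomial_index _ _ (by simp)]
  rfl

theorem skewEval_C_mul_X_pow (n : ℕ) (c : K) : skewEval (C c * X ^ n) φ x = c • φ^[n] x := by
  rw [C_mul_X_pow_eq_monomial, skewEval_monomial]

theorem skewEval_mem_span (P : K[X]) :
    skewEval P φ x ∈ Submodule.span K (Set.range fun i : ℕ => φ^[i] x) :=
  Submodule.sum_mem _ fun i _ => Submodule.smul_mem _ _ (Submodule.subset_span ⟨i, rfl⟩)

theorem range_skewEvalLinearMap :
    LinearMap.range (skewEvalLinearMap K φ x) =
      Submodule.span K (Set.range fun i : ℕ => φ^[i] x) := by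
  refine le_antisymm ?_ (Submodule.span_le.mpr ?_)
  · rintro _ ⟨P, rfl⟩
    exact skewEval_mem_span φ x P
  · rintro _ ⟨i, rfl⟩
    exact ⟨monomial i 1, by rw [skewEvalLinearMap_apply, skewEval_monomial, one_smul]⟩

end SkewEval

structure IsPowSemilinear (K : Type*) {V : Type*} [Field K] [AddCommGroup V] [Module K V]
    (q : ℕ) (φ : V → V) : Prop where
  map_add : ∀ x y, φ (x + y) = φ x + φ y
  map_smul : ∀ (c : K) x, φ (c • x) = c ^ q • φ x

namespace IsPowSemilinear

variable {K V : Type*} [Field K] [AddCommGroup V] [Module K V] {q : ℕ} {φ : V → V}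

theorem map_sum (hφ : IsPowSemilinear K q φ) {ι : Type*} (s : Finset ι) (f : ι → V) :
    φ (∑ i ∈ s, f i) = ∑ i ∈ s, φ (f i) :=
  _root_.map_sum (AddMonoidHom.mk' φ hφ.map_add) f s

theorem map_zero (hφ : IsPowSemilinear K q φ) : φ 0 = 0 :=
  _root_.map_zero (AddMonoidHom.mk' φ hφ.map_add)

theorem iterate (hφ : IsPowSemilinear K q φ) (n : ℕ) : IsPowSemilinear K (q ^ n) φ^[n] := by
  induction n with
  | zero => exact ⟨fun _ _ => rfl, fun _ _ => by rw [pow_zero, pow_one]; rfl⟩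
  | succ n ih =>
    refine ⟨fun x y => ?_, fun c x => ?_⟩
    · rw [Function.iterate_succ_apply, hφ.map_add, ih.map_add]; rfl
    · rw [Function.iterate_succ_apply, hφ.map_smul, ih.map_smul, ← pow_mul, ← pow_succ']; rfl

theorem skewEval_zero_right (hφ : IsPowSemilinear K q φ) (P : K[X]) : skewEval P φ 0 = 0 :=
  Finset.sum_eq_zero fun i _ => by rw [(hφ.iterate i).map_zero, smul_zero]

theorem skewEval_skewMul (hφ : IsPowSemilinear K q φ) (A B : K[X]) (x : V) :
    skewEval (skewMul q A B) φ x = skewEval A φ (skewEval B φ x) := by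
  simp only [skewMul, skewEval_sum, skewEval_C_mul_X_pow]
  refine Finset.sum_congr rfl fun i _ => ?_
  rw [skewEval, (hφ.iterate i).map_sum, Finset.smul_sum]
  refine Finset.sum_congr rfl fun j _ => ?_
  rw [(hφ.iterate i).map_smul, smul_smul, Function.iterate_add_apply]

end IsPowSemilinear

section SkewMul

variable {K : Type*} [Field K] {q : ℕ}

theorem skewMul_zero_left (B : K[X]) : skewMul q 0 B = 0 := by
  simp [skewMul]

theorem skewMul_add_left (A A' B : K[X]) :
    skewMul q (A + A') B = skewMul q A B + skewMul q A' B := by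
  have h (P : K[X]) : skewMul q P B =
      P.sum fun i a => ∑ j ∈ B.support, C (a * B.coeff j ^ q ^ i) * X ^ (i + j) := rfl
  rw [h, h, h]
  exact sum_add_index _ _ _ (fun i => by simp)
    fun i a a' => by simp only [add_mul, C_add, Finset.sum_add_distrib]

theorem natDegree_skewMul_le (A B : K[X]) :
    (skewMul q A B).natDegree ≤ A.natDegree + B.natDegree :=
  natDegree_sum_le_of_forall_le _ _ fun i hi => natDegree_sum_le_of_forall_le _ _ fun j hj =>
    (natDegree_C_mul_X_pow_le _ _).trans
      (add_le_add (le_natDegree_of_mem_supp i hi) (le_natDegree_of_mem_supp j hj))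

theorem coeff_skewMul_natDegree_add {A B : K[X]} (hA : A ≠ 0) (hB : B ≠ 0) :
    (skewMul q A B).coeff (A.natDegree + B.natDegree) =
      A.leadingCoeff * B.leadingCoeff ^ q ^ A.natDegree := by
  simp only [skewMul, finsetSum_coeff, coeff_C_mul_X_pow]
  rw [Finset.sum_eq_single_of_mem _ (natDegree_mem_support_of_nonzero hA) fun i hi hiA => ?_,
    Finset.sum_eq_single_of_mem _ (natDegree_mem_support_of_nonzero hB) fun j hj hjB => ?_,
    if_pos rfl]
  · rfl
  · have := le_natDegree_of_mem_supp j hj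
    exact if_neg (by omega)
  · have := lt_of_le_of_ne (le_natDegree_of_mem_supp i hi) hiA
    exact Finset.sum_eq_zero fun j hj => if_neg (by have := le_natDegree_of_mem_supp j hj; omega)

theorem natDegree_skewMul {A B : K[X]} (hA : A ≠ 0) (hB : B ≠ 0) :
    (skewMul q A B).natDegree = A.natDegree + B.natDegree := by
  refine le_antisymm (natDegree_skewMul_le A B) (le_natDegree_of_ne_zero ?_)
  rw [coeff_skewMul_natDegree_add hA hB]
  exact mul_ne_zero (leadingCoeff_ne_zero.mpr hA) (pow_ne_zero _ (leadingCoeff_ne_zero.mpr hB))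

theorem leadingCoeff_skewMul {A B : K[X]} (hA : A ≠ 0) (hB : B ≠ 0) :
    (skewMul q A B).leadingCoeff = A.leadingCoeff * B.leadingCoeff ^ q ^ A.natDegree := by
  rw [leadingCoeff, natDegree_skewMul hA hB, coeff_skewMul_natDegree_add hA hB]

theorem Polynomial.Monic.skewMul {A B : K[X]} (hA : A.Monic) (hB : B.Monic) :
    (skewMul q A B).Monic := by
  rw [Monic, leadingCoeff_skewMul hA.ne_zero hB.ne_zero, hA.leadingCoeff, hB.leadingCoeff,
    one_pow, one_mul]

end SkewMul

theorem exists_eq_skewMul_add_of_monic {K : Type*} [Field K] (q : ℕ) {B : K[X]} (hB : B.Monic)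
    (Q : K[X]) : ∃ A R : K[X], Q = skewMul q A B + R ∧ R.degree < B.degree := by
  induction Q using degree_lt_wf.induction with
  | _ Q ih =>
  by_cases hQB : Q.degree < B.degree
  · exact ⟨0, Q, by rw [skewMul_zero_left, zero_add], hQB⟩
  have hQ : Q ≠ 0 := ne_zero_of_degree_ge_degree (not_lt.mp hQB) hB.ne_zero
  have hBQ : B.natDegree ≤ Q.natDegree := natDegree_le_natDegree (not_lt.mp hQB)
  set T := C Q.leadingCoeff * X ^ (Q.natDegree - B.natDegree)
  have hT : T ≠ 0 := by simpa [T] using hQ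
  have hTdeg : T.natDegree = Q.natDegree - B.natDegree := by simp [T, hQ]
  set M := skewMul q T B
  have hMdeg : M.natDegree = Q.natDegree := by
    rw [natDegree_skewMul hT hB.ne_zero, hTdeg]; omega
  have hMlc : M.leadingCoeff = Q.leadingCoeff := by
    rw [leadingCoeff_skewMul hT hB.ne_zero, hB.leadingCoeff, one_pow, mul_one]
    simp [T]
  have hM : M ≠ 0 := leadingCoeff_ne_zero.mp (hMlc ▸ leadingCoeff_ne_zero.mpr hQ)
  obtain ⟨A, R, hQMR, hR⟩ := ih (Q - M) (degree_sub_lt_left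
    (by rw [degree_eq_natDegree hQ, degree_eq_natDegree hM, hMdeg]) hQ hMlc.symm)
  exact ⟨A + T, R, by rw [skewMul_add_left, add_right_comm, ← hQMR, sub_add_cancel], hR⟩

def IsCyclicVector (K : Type*) {V : Type*} [Field K] [AddCommGroup V] [Module K V]
    (φ : V → V) (x : V) : Prop :=
  Submodule.span K (Set.range fun i : ℕ => φ^[i] x) = ⊤

namespace IsMinSkew

variable {K V : Type*} [Field K] [AddCommGroup V] [Module K V] {q : ℕ} {φ : V → V} {x : V}
  {χ : K[X]}

theorem skewEval_skewMul_add (hφ : IsPowSemilinear K q φ) (hχ : IsMinSkew χ φ x)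
    (A R : K[X]) : skewEval (skewMul q A χ + R) φ x = skewEval R φ x := by
  rw [skewEval_add, hφ.skewEval_skewMul, hχ.2.1, hφ.skewEval_zero_right, zero_add]

theorem skewRightDvd (hφ : IsPowSemilinear K q φ) (hχ : IsMinSkew χ φ x) {Q : K[X]}
    (hQ : skewEval Q φ x = 0) : SkewRightDvd q χ Q := by
  obtain ⟨A, R, rfl, hR⟩ := exists_eq_skewMul_add_of_monic q hχ.1 Q
  rw [hχ.skewEval_skewMul_add hφ] at hQ
  obtain rfl : R = 0 := by
    by_contra hR0
    exact (hχ.2.2 R hR0 hQ).not_gt (natDegree_lt_natDegree hR0 hR)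
  exact ⟨A, add_zero _⟩

theorem linearIndependent_iterate (hχ : IsMinSkew χ φ x) :
    LinearIndependent K (fun i : Fin χ.natDegree => φ^[i] x) := by
  refine Fintype.linearIndependent_iff.mpr fun g hg => ?_
  set Q : K[X] := ∑ i : Fin χ.natDegree, C (g i) * X ^ (i : ℕ)
  have hQx : skewEval Q φ x = 0 := by simp only [Q, skewEval_sum, skewEval_C_mul_X_pow, hg]
  have hQ : Q = 0 := by
    by_contra hQ
    exact (hχ.2.2 Q hQ hQx).not_gt (natDegree_lt_natDegree hQ
      ((degree_sum_fin_lt g).trans_eq (degree_eq_natDegree hχ.1.ne_zero).symm))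
  intro j
  simpa [Q, finsetSum_coeff, coeff_C_mul_X_pow, Fin.val_inj] using congrArg (coeff · j) hQ

theorem skewEval_mem_span_iterate (hφ : IsPowSemilinear K q φ) (hχ : IsMinSkew χ φ x)
    (Q : K[X]) :
    skewEval Q φ x ∈ Submodule.span K (Set.range fun i : Fin χ.natDegree => φ^[i] x) := by
  obtain ⟨A, R, rfl, hR⟩ := exists_eq_skewMul_add_of_monic q hχ.1 Q
  rw [hχ.skewEval_skewMul_add hφ]
  refine Submodule.sum_mem _ fun i hi => Submodule.smul_mem _ _ (Submodule.subset_span ?_)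
  have hi : i < χ.natDegree := by
    have := (le_degree_of_mem_supp i hi).trans_lt hR
    rwa [degree_eq_natDegree hχ.1.ne_zero, Nat.cast_lt] at this
  exact ⟨⟨i, hi⟩, rfl⟩

theorem natDegree_eq_finrank (hφ : IsPowSemilinear K q φ) (hχ : IsMinSkew χ φ x)
    (hx : IsCyclicVector K φ x) : χ.natDegree = finrank K V := by
  have hspan : Submodule.span K (Set.range fun i : Fin χ.natDegree => φ^[i] x) = ⊤ := by
    rw [eq_top_iff, ← hx, ← range_skewEvalLinearMap]
    rintro _ ⟨Q, rfl⟩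
    exact hχ.skewEval_mem_span_iterate hφ Q
  have := finrank_span_eq_card hχ.linearIndependent_iterate
  rwa [hspan, finrank_top, Fintype.card_fin, eq_comm] at this

theorem linearIndependent_iterate_finrank (hφ : IsPowSemilinear K q φ) (hχ : IsMinSkew χ φ x)
    (hx : IsCyclicVector K φ x) :
    LinearIndependent K (fun i : Fin (finrank K V) => φ^[i] x) := by
  rw [← hχ.natDegree_eq_finrank hφ hx]
  exact hχ.linearIndependent_iterate

theorem eq_of_monic (hχ : IsMinSkew χ φ x) {P : K[X]} (hP : P.Monic) (hPx : skewEval P φ x = 0)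
    (hdeg : P.natDegree ≤ χ.natDegree) : P = χ := by
  have hdeg' : P.degree = χ.degree := by
    rw [degree_eq_natDegree hP.ne_zero, degree_eq_natDegree hχ.1.ne_zero,
      le_antisymm hdeg (hχ.2.2 P hP.ne_zero hPx)]
  by_contra hne
  have hsub := degree_sub_lt_left hdeg' hP.ne_zero (hP.leadingCoeff.trans hχ.1.leadingCoeff.symm)
  have hsubx : skewEval (P - χ) φ x = 0 := by rw [skewEval_sub, hPx, hχ.2.1, sub_zero]
  exact (hχ.2.2 _ (sub_ne_zero.mpr hne) hsubx).not_gt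
    ((natDegree_lt_natDegree (sub_ne_zero.mpr hne) hsub).trans_le hdeg)

end IsMinSkew

section Cyclic

variable {K V V₁ V₂ : Type*} [Field K] [AddCommGroup V] [Module K V]
  [AddCommGroup V₁] [Module K V₁] [AddCommGroup V₂] [Module K V₂]
  {q : ℕ} {φ : V → V} {φ₁ : V₁ → V₁} {φ₂ : V₂ → V₂}

theorem map_skewEval (f : V →ₗ[K] V₂) (hf : Function.Semiconj f φ φ₂) (P : K[X]) (x : V) :
    f (skewEval P φ x) = skewEval P φ₂ (f x) := by
  simp only [skewEval, map_sum, map_smul]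
  exact Finset.sum_congr rfl fun i _ => by rw [hf.iterate_right i x]

theorem isCyclicVector_of_linearIndependent [FiniteDimensional K V] {x : V}
    (hx : LinearIndependent K (fun i : Fin (finrank K V) => φ^[i] x)) :
    IsCyclicVector K φ x := by
  rw [IsCyclicVector, eq_top_iff, ← hx.span_eq_top_of_card_eq_finrank' (Fintype.card_fin _)]
  exact Submodule.span_mono (Set.range_comp_subset_range Fin.val fun i => φ^[i] x)

theorem IsCyclicVector.map {x : V} (hx : IsCyclicVector K φ x) {f : V →ₗ[K] V₂}
    (hf : Function.Surjective f) (hc : Function.Semiconj f φ φ₂) :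
    IsCyclicVector K φ₂ (f x) := by
  rw [IsCyclicVector, ← LinearMap.range_eq_top.mpr hf, LinearMap.range_eq_map, ← hx,
    Submodule.map_span, ← Set.range_comp]
  simp only [Function.comp_def, fun n => hc.iterate_right n x]

theorem IsCyclicVector.of_exact (hφ : IsPowSemilinear K q φ) (hφ₂ : IsPowSemilinear K q φ₂)
    {ι : V₁ →ₗ[K] V} {π : V →ₗ[K] V₂} (hι : Function.Injective ι)
    (hexact : LinearMap.range ι = LinearMap.ker π)
    (hc₁ : Function.Semiconj ι φ₁ φ) (hc₂ : Function.Semiconj π φ φ₂)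
    {x : V} (hx : IsCyclicVector K φ x) {χ₂ : K[X]} (hχ₂ : IsMinSkew χ₂ φ₂ (π x))
    {y : V₁} (hy : ι y = skewEval χ₂ φ x) : IsCyclicVector K φ₁ y := by
  refine eq_top_iff.mpr fun w _ => ?_
  obtain ⟨Q, hQ⟩ : ι w ∈ LinearMap.range (skewEvalLinearMap K φ x) := by
    rw [range_skewEvalLinearMap, hx]; trivial
  rw [skewEvalLinearMap_apply] at hQ
  have hQπ : skewEval Q φ₂ (π x) = 0 := by
    rw [← map_skewEval π hc₂, hQ, ← LinearMap.mem_ker, ← hexact]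
    exact LinearMap.mem_range_self ι w
  obtain ⟨A, rfl⟩ := hχ₂.skewRightDvd hφ₂ hQπ
  rw [hφ.skewEval_skewMul, ← hy, ← map_skewEval ι hc₁] at hQ
  rw [← hι hQ]
  exact skewEval_mem_span φ₁ y A

theorem finrank_eq_add_of_exact [FiniteDimensional K V] {ι : V₁ →ₗ[K] V} {π : V →ₗ[K] V₂}
    (hι : Function.Injective ι) (hπ : Function.Surjective π)
    (hexact : LinearMap.range ι = LinearMap.ker π) :
    finrank K V = finrank K V₁ + finrank K V₂ := by
  rw [← LinearMap.finrank_range_add_finrank_ker π, ← hexact, LinearMap.finrank_range_of_inj hι,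
    LinearMap.range_eq_top.mpr hπ, finrank_top, add_comm]

end Cyclic

theorem semichar_of_exact_sequence_general (K : Type*) [Field K]
    (q : ℕ)
    (D₁ D D₂ : Type*)
    [AddCommGroup D₁] [Module K D₁] [FiniteDimensional K D₁]
    [AddCommGroup D] [Module K D] [FiniteDimensional K D]
    [AddCommGroup D₂] [Module K D₂] [FiniteDimensional K D₂]
    (ι : D₁ →ₗ[K] D) (π : D →ₗ[K] D₂)
    (hι : Function.Injective ι) (hπ : Function.Surjective π)
    (hexact : LinearMap.range ι = LinearMap.ker π)
    (φ₁ : D₁ → D₁) (φ : D → D) (φ₂ : D₂ → D₂)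
    (hadd₁ : ∀ x y : D₁, φ₁ (x + y) = φ₁ x + φ₁ y)
    (hsemi₁ : ∀ (c : K) (x : D₁), φ₁ (c • x) = c ^ q • φ₁ x)
    (hadd : ∀ x y : D, φ (x + y) = φ x + φ y)
    (hsemi : ∀ (c : K) (x : D), φ (c • x) = c ^ q • φ x)
    (hadd₂ : ∀ x y : D₂, φ₂ (x + y) = φ₂ x + φ₂ y)
    (hsemi₂ : ∀ (c : K) (x : D₂), φ₂ (c • x) = c ^ q • φ₂ x)
    (hcomm₁ : ∀ y : D₁, ι (φ₁ y) = φ (ι y))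
    (hcomm₂ : ∀ z : D, π (φ z) = φ₂ (π z))
    (x : D)
    (hgenx : LinearIndependent K (fun i : Fin (Module.finrank K D) => φ^[(i : ℕ)] x))
    (χ₂ : Polynomial K) (hχ₂ : IsMinSkew χ₂ φ₂ (π x))
    (y₁ : D₁) (hy₁ : ι y₁ = skewEval χ₂ φ x)
    (χ₁ : Polynomial K) (hχ₁ : IsMinSkew χ₁ φ₁ y₁)
    (χ : Polynomial K) (hχ : IsMinSkew χ φ x) :
    (LinearIndependent K (fun i : Fin (Module.finrank K D₂) => φ₂^[(i : ℕ)] (π x))) ∧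
    (LinearIndependent K (fun i : Fin (Module.finrank K D₁) => φ₁^[(i : ℕ)] y₁)) ∧
    χ = skewMul q χ₁ χ₂ := by
  have hφ₁ : IsPowSemilinear K q φ₁ := ⟨hadd₁, hsemi₁⟩
  have hφ : IsPowSemilinear K q φ := ⟨hadd, hsemi⟩
  have hφ₂ : IsPowSemilinear K q φ₂ := ⟨hadd₂, hsemi₂⟩
  have hx : IsCyclicVector K φ x := isCyclicVector_of_linearIndependent hgenx
  have hx₂ : IsCyclicVector K φ₂ (π x) := hx.map hπ hcomm₂
  have hx₁ : IsCyclicVector K φ₁ y₁ := hx.of_exact hφ hφ₂ hι hexact hcomm₁ hcomm₂ hχ₂ hy₁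
  refine ⟨hχ₂.linearIndependent_iterate_finrank hφ₂ hx₂,
    hχ₁.linearIndependent_iterate_finrank hφ₁ hx₁,
    (hχ.eq_of_monic (hχ₁.1.skewMul hχ₂.1) ?_ ?_).symm⟩
  · rw [hφ.skewEval_skewMul, ← hy₁, ← map_skewEval ι hcomm₁, hχ₁.2.1, map_zero]
  · rw [natDegree_skewMul hχ₁.1.ne_zero hχ₂.1.ne_zero, hχ₁.natDegree_eq_finrank hφ₁ hx₁,
      hχ₂.natDegree_eq_finrank hφ₂ hx₂, hχ.natDegree_eq_finrank hφ hx,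
      finrank_eq_add_of_exact hι hπ hexact]

/-- Given an exact sequence `0 → D₁ → D → D₂ → 0` of `φ`-modules over `K` and
a generator `x` of `D`, with `x̄ = π x` its image in `D₂` and `x₁ = χ_{φ₂,x̄}(φ)(x) ∈ D₁`
(written `ι y₁ = χ_{φ₂,x̄}(φ)(x)`), the element `x̄` generates `D₂`, `y₁` generates `D₁`,
and `χ_{φ,x} = χ_{φ₁,y₁} ⬝ χ_{φ₂,x̄}` in `K[X,σ]`. -/
theorem semichar_of_exact_sequence (K : Type*) [Field K]
    (p a q : ℕ) (hp : p.Prime) [CharP K p] (ha : 0 < a) (hq : q = p ^ a)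
    (hFq : Nat.card {x : K // x ^ q = x} = q)
    (D₁ D D₂ : Type*)
    [AddCommGroup D₁] [Module K D₁] [FiniteDimensional K D₁]
    [AddCommGroup D] [Module K D] [FiniteDimensional K D]
    [AddCommGroup D₂] [Module K D₂] [FiniteDimensional K D₂]
    (ι : D₁ →ₗ[K] D) (π : D →ₗ[K] D₂)
    (hι : Function.Injective ι) (hπ : Function.Surjective π)
    (hexact : LinearMap.range ι = LinearMap.ker π)
    (φ₁ : D₁ → D₁) (φ : D → D) (φ₂ : D₂ → D₂)
    (hadd₁ : ∀ x y : D₁, φ₁ (x + y) = φ₁ x + φ₁ y)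
    (hsemi₁ : ∀ (c : K) (x : D₁), φ₁ (c • x) = c ^ q • φ₁ x)
    (hadd : ∀ x y : D, φ (x + y) = φ x + φ y)
    (hsemi : ∀ (c : K) (x : D), φ (c • x) = c ^ q • φ x)
    (hadd₂ : ∀ x y : D₂, φ₂ (x + y) = φ₂ x + φ₂ y)
    (hsemi₂ : ∀ (c : K) (x : D₂), φ₂ (c • x) = c ^ q • φ₂ x)
    (hcomm₁ : ∀ y : D₁, ι (φ₁ y) = φ (ι y))
    (hcomm₂ : ∀ z : D, π (φ z) = φ₂ (π z))
    (x : D)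
    (hgenx : LinearIndependent K (fun i : Fin (Module.finrank K D) => φ^[(i : ℕ)] x))
    (χ₂ : Polynomial K) (hχ₂ : IsMinSkew χ₂ φ₂ (π x))
    (y₁ : D₁) (hy₁ : ι y₁ = skewEval χ₂ φ x)
    (χ₁ : Polynomial K) (hχ₁ : IsMinSkew χ₁ φ₁ y₁)
    (χ : Polynomial K) (hχ : IsMinSkew χ φ x) :
    (LinearIndependent K (fun i : Fin (Module.finrank K D₂) => φ₂^[(i : ℕ)] (π x))) ∧
    (LinearIndependent K (fun i : Fin (Module.finrank K D₁) => φ₁^[(i : ℕ)] y₁)) ∧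
    χ = skewMul q χ₁ χ₂ :=
  semichar_of_exact_sequence_general K q D₁ D D₂ ι π hι hπ hexact φ₁ φ φ₂ hadd₁ hsemi₁ hadd hsemi
    hadd₂ hsemi₂ hcomm₁ hcomm₂ x hgenx χ₂ hχ₂ y₁ hy₁ χ₁ hχ₁ χ hχ
end

section
/- Let P = X^d − Σ_{i=0}^{d-1} a_i X^i be a monic skew polynomial in F_{q^r}[X,σ], σ(x) = x^q, and let L_P = X^{q^d} − Σ a_i X^{q^i} be the associated q-linearized polynomial. Let D_P be the φ-module with basis e_0,...,e_{d-1}, φ(e_i) = e_{i+1} for i < d−1 and φ(e_{d-1}) = Σ a_i e_i. Then the map f ↦ f(e_0) is a bijection from the set of φ-equivariant F_{q^r}-linear-over-Frobenius homomorphisms Hom_φ(D_P, F̄_q) (where φ acts on F̄_q by x ↦ x^q) to the set of roots of L_P in F̄_q. -/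
/-! An equivariant `f` is determined by `ξ = f e₀`, since `f eᵢ = ξ ^ q ^ i`; applying `f` to
`φ e_{d-1} = ∑ cᵢ • eᵢ` shows that `ξ` is a root of `L_P`. Conversely, for a root `ξ` the
`F`-linear map `eᵢ ↦ ξ ^ q ^ i` is equivariant on the basis, hence everywhere, because `q` is a
power of the characteristic and so `x ↦ x ^ q` is additive on `F̄_q`. -/

section CyclicPhiModule

variable {F K D ι : Type*} [CommRing F] [CommRing K] [Algebra F K] [AddCommGroup D] [Module F D]
  {d : ℕ}

def IsLinearizedRoot (q : ℕ) (c : Fin d → F) (ξ : K) : Prop :=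
  ξ ^ q ^ d = ∑ i : Fin d, algebraMap F K (c i) * ξ ^ q ^ (i : ℕ)

variable {q : ℕ}

theorem apply_basis_eq_pow (e : Module.Basis (Fin d) F D) {φ : D → D}
    (hstep : ∀ (i : Fin d) (h : (i : ℕ) + 1 < d), φ (e i) = e ⟨(i : ℕ) + 1, h⟩)
    {f : D →ₗ[F] K} (hf : ∀ u : D, f (φ u) = f u ^ q) (hd : 0 < d) (i : Fin d) :
    f (e i) = f (e ⟨0, hd⟩) ^ q ^ (i : ℕ) := by
  obtain ⟨n, hn⟩ := i
  induction n with
  | zero => simp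
  | succ n ih =>
    calc f (e ⟨n + 1, hn⟩) = f (e ⟨n, by omega⟩) ^ q := by rw [← hf, hstep ⟨n, _⟩ hn]
      _ = f (e ⟨0, hd⟩) ^ q ^ (n + 1) := by rw [ih, ← pow_mul, pow_succ]

theorem ext_of_apply_basis_zero (e : Module.Basis (Fin d) F D) {φ : D → D}
    (hstep : ∀ (i : Fin d) (h : (i : ℕ) + 1 < d), φ (e i) = e ⟨(i : ℕ) + 1, h⟩)
    {f g : D →ₗ[F] K} (hf : ∀ u : D, f (φ u) = f u ^ q) (hg : ∀ u : D, g (φ u) = g u ^ q)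
    (hd : 0 < d) (h₀ : f (e ⟨0, hd⟩) = g (e ⟨0, hd⟩)) : f = g :=
  e.ext fun i => by rw [apply_basis_eq_pow e hstep hf hd, apply_basis_eq_pow e hstep hg hd, h₀]

theorem isLinearizedRoot_apply_basis_zero (e : Module.Basis (Fin d) F D) {φ : D → D}
    (c : Fin d → F) (hd : 0 < d)
    (hstep : ∀ (i : Fin d) (h : (i : ℕ) + 1 < d), φ (e i) = e ⟨(i : ℕ) + 1, h⟩)
    (hlast : φ (e ⟨d - 1, by omega⟩) = ∑ i : Fin d, c i • e i)
    {f : D →ₗ[F] K} (hf : ∀ u : D, f (φ u) = f u ^ q) :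
    IsLinearizedRoot q c (f (e ⟨0, hd⟩)) := by
  have hpow := apply_basis_eq_pow e hstep hf hd
  calc f (e ⟨0, hd⟩) ^ q ^ d = (f (e ⟨0, hd⟩) ^ q ^ (d - 1)) ^ q := by
        rw [← pow_mul, ← pow_succ, Nat.sub_add_cancel hd]
    _ = f (φ (e ⟨d - 1, by omega⟩)) := by rw [hf, hpow ⟨d - 1, _⟩]
    _ = _ := by
      simp only [hlast, map_sum, map_smul, Algebra.smul_def]
      exact Finset.sum_congr rfl fun i _ => by rw [hpow i]

theorem equivariant_of_apply_basis [Fintype ι] (e : Module.Basis ι F D) {φ : D → D}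
    (hadd : ∀ u v : D, φ (u + v) = φ u + φ v) (hsemi : ∀ (s : F) (u : D), φ (s • u) = s ^ q • φ u)
    (hfrob : ∀ x y : K, (x + y) ^ q = x ^ q + y ^ q)
    {f : D →ₗ[F] K} (hbasis : ∀ i, f (φ (e i)) = f (e i) ^ q) (u : D) :
    f (φ u) = f u ^ q := by
  let φ' : D →+ D := AddMonoidHom.mk' φ hadd
  let frob : K →+ K := AddMonoidHom.mk' (· ^ q) hfrob
  rw [← e.sum_repr u]
  change f (φ' _) = frob (f _)
  simp only [map_sum]
  refine Finset.sum_congr rfl fun i _ => ?_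
  simp only [φ', frob, AddMonoidHom.mk'_apply, hsemi, map_smul, Algebra.smul_def, map_pow,
    mul_pow, hbasis]

theorem exists_equivariant_of_isLinearizedRoot (e : Module.Basis (Fin d) F D) {φ : D → D}
    (c : Fin d → F) (hd : 0 < d)
    (hadd : ∀ u v : D, φ (u + v) = φ u + φ v) (hsemi : ∀ (s : F) (u : D), φ (s • u) = s ^ q • φ u)
    (hstep : ∀ (i : Fin d) (h : (i : ℕ) + 1 < d), φ (e i) = e ⟨(i : ℕ) + 1, h⟩)
    (hlast : φ (e ⟨d - 1, by omega⟩) = ∑ i : Fin d, c i • e i)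
    (hfrob : ∀ x y : K, (x + y) ^ q = x ^ q + y ^ q) {ξ : K} (hξ : IsLinearizedRoot q c ξ) :
    ∃ f : D →ₗ[F] K, (∀ u : D, f (φ u) = f u ^ q) ∧ f (e ⟨0, hd⟩) = ξ := by
  let f : D →ₗ[F] K := e.constr F fun i => ξ ^ q ^ (i : ℕ)
  have hfe (i : Fin d) : f (e i) = ξ ^ q ^ (i : ℕ) := e.constr_basis F _ i
  refine ⟨f, equivariant_of_apply_basis e hadd hsemi hfrob fun i => ?_, by simp [hfe]⟩
  rw [hfe, ← pow_mul, ← pow_succ]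
  by_cases h : (i : ℕ) + 1 < d
  · rw [hstep i h, hfe]
  · rw [show i = ⟨d - 1, by omega⟩ from Fin.ext (show (i : ℕ) = d - 1 by omega)]
    simp only [hlast, map_sum, map_smul, Algebra.smul_def, hfe]
    rw [Nat.sub_add_cancel hd, hξ]

end CyclicPhiModule

/-- For a monic skew polynomial `P = X^d − Σ aᵢ Xⁱ` over `F_{q^r}` with
associated `q`-linearized polynomial `L_P = X^{q^d} − Σ aᵢ X^{qⁱ}` and associated
`φ`-module `D_P` (basis `e₀, …, e_{d-1}`, `φ(eᵢ) = eᵢ₊₁`, `φ(e_{d-1}) = Σ aᵢ eᵢ`),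
the map `f ↦ f(e₀)` is a bijection from the set of `φ`-equivariant homomorphisms
`Hom_φ(D_P, F̄_q)` (where `φ` acts on `F̄_q` by `x ↦ x^q`) onto the set of roots of `L_P`. -/
theorem linearized_roots_bijection
    (p a q r : ℕ) (hp : p.Prime) (hq : q = p ^ a)
    (F : Type*) [Field F] [Fintype F] (hF : Fintype.card F = q ^ r)
    (d : ℕ) (hd : 0 < d) (c : Fin d → F)
    (D : Type*) [AddCommGroup D] [Module F D]
    (e : Module.Basis (Fin d) F D)
    (φ : D → D) (hadd : ∀ u v : D, φ (u + v) = φ u + φ v)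
    (hsemi : ∀ (s : F) (u : D), φ (s • u) = s ^ q • φ u)
    (hstep : ∀ (i : Fin d) (h : (i : ℕ) + 1 < d), φ (e i) = e ⟨(i : ℕ) + 1, h⟩)
    (hlast : φ (e ⟨d - 1, by omega⟩) = ∑ i : Fin d, c i • e i) :
    -- `f ↦ f(e₀)` is injective on `Hom_φ(D_P, F̄_q)` …
    (∀ f g : D →ₗ[F] AlgebraicClosure F,
        (∀ u : D, f (φ u) = f u ^ q) → (∀ u : D, g (φ u) = g u ^ q) →
        f (e ⟨0, hd⟩) = g (e ⟨0, hd⟩) → f = g) ∧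
    -- … it lands in the set of roots of `L_P` …
    (∀ f : D →ₗ[F] AlgebraicClosure F, (∀ u : D, f (φ u) = f u ^ q) →
        f (e ⟨0, hd⟩) ^ q ^ d =
          ∑ i : Fin d, algebraMap F (AlgebraicClosure F) (c i) * f (e ⟨0, hd⟩) ^ q ^ (i : ℕ)) ∧
    -- … and every root of `L_P` is hit.
    (∀ ξ : AlgebraicClosure F,
        ξ ^ q ^ d = ∑ i : Fin d, algebraMap F (AlgebraicClosure F) (c i) * ξ ^ q ^ (i : ℕ) →
        ∃ f : D →ₗ[F] AlgebraicClosure F,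
          (∀ u : D, f (φ u) = f u ^ q) ∧ f (e ⟨0, hd⟩) = ξ) := by
  have : Fact p.Prime := ⟨hp⟩
  have : CharP F p := charP_of_card_eq_prime_pow (hF.trans (hq ▸ (pow_mul p a r).symm))
  have : CharP (AlgebraicClosure F) p :=
    charP_of_injective_algebraMap (algebraMap F (AlgebraicClosure F)).injective p
  have hfrob (x y : AlgebraicClosure F) : (x + y) ^ q = x ^ q + y ^ q := hq ▸ add_pow_char_pow ..
  exact ⟨fun f g hf hg => ext_of_apply_basis_zero e hstep hf hg hd,
    fun f hf => isLinearizedRoot_apply_basis_zero e c hd hstep hlast hf,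
    fun ξ hξ => exists_equivariant_of_isLinearizedRoot e c hd hadd hsemi hstep hlast hfrob hξ⟩
end
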